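/- (Equilibrium magnetization in the microcanonical ensemble) For e ∈ [e₋, e₊], let P_e^N := (1/Z_e^N) Σ P_{ε_1}⊗…⊗P_{ε_N}, the sum over all (ε_1,…,ε_N) ∈ {e₊,e₋}^N with Ne ≤ Σ_j ε_j < e₊ − e₋ + Ne, and Z_e^N the normalization making Tr[P_e^N] = 1. Then the limit m⃗_e := lim_{N→∞} (1/N)(Tr[P_e^N M_N^x], Tr[P_e^N M_N^y], Tr[P_e^N M_N^z]) exists and equals e h⃗/h². -/

import Mathlib

open scoped BigOperators
open Matrix Filter
open scoped ComplexOrder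

noncomputable section

/-- 2×2 complex matrices: single-site operators. -/
abbrev Mat2 := Matrix (Fin 2) (Fin 2) ℂ

/-- Operators on the `N`-site Hilbert space `⊗_{j=1}^N ℂ²`, identified with
matrices indexed by configurations `Fin N → Fin 2`. -/
abbrev MatN (N : ℕ) := Matrix (Fin N → Fin 2) (Fin N → Fin 2) ℂ

/-- Pauli matrices. -/
def σx : Mat2 := !![0, 1; 1, 0]
def σy : Mat2 := !![0, -Complex.I; Complex.I, 0]
def σz : Mat2 := !![1, 0; 0, -1]
def pauli : Fin 3 → Mat2 := ![σx, σy, σz]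

/-- `m⃗ · σ⃗` for a real vector `m⃗ ∈ ℝ³`. -/
def dotPauli (m : Fin 3 → ℝ) : Mat2 := ∑ i, (m i : ℂ) • pauli i

/-- Euclidean norm on ℝ³. -/
def norm3 (v : Fin 3 → ℝ) : ℝ := Real.sqrt (∑ i, (v i) ^ 2)

/-- dot product on ℝ³. -/
def dot3 (u v : Fin 3 → ℝ) : ℝ := ∑ i, u i * v i

/-- tensor product `⊗_j B j` of single-site matrices. -/
def tens {N : ℕ} (B : Fin N → Mat2) : MatN N := fun η η' => ∏ j, B j (η j) (η' j)

/-- `B_j = 𝟙 ⊗ ⋯ ⊗ B ⊗ ⋯ ⊗ 𝟙` with `B` at site `j`. -/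
def site (N : ℕ) (j : Fin N) (B : Mat2) : MatN N :=
  tens (Function.update (fun _ => (1 : Mat2)) j B)

/-- `B_N = ∑_j B_j`. -/
def sumSite (N : ℕ) (B : Mat2) : MatN N := ∑ j, site N j B

/-- partial trace onto site `j` (reduced density matrix at site `j`). -/
def ptrace {N : ℕ} (j : Fin N) (ρ : MatN N) : Mat2 :=
  fun a b => ∑ η : Fin N → Fin 2, if η j = a then ρ η (Function.update η j b) else 0

/-- functional calculus `f(M)` for a Hermitian matrix `M` (junk value `0` otherwise). -/
def matFun {n : Type*} [Fintype n] [DecidableEq n] (f : ℝ → ℝ) (M : Matrix n n ℂ) :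
    Matrix n n ℂ :=
  if hM : M.IsHermitian then
    (hM.eigenvectorUnitary : Matrix n n ℂ) *
      Matrix.diagonal (fun i => (f (hM.eigenvalues i) : ℂ)) *
        (hM.eigenvectorUnitary : Matrix n n ℂ)ᴴ
  else 0

/-- `k_j(ε,t) = ∑_{n=1}^t ε_{(j-n) mod N}`. -/
def kSteps (N t : ℕ) (ε : Fin N → Fin 2) (j : Fin N) : ℕ :=
  ∑ n ∈ Finset.Icc 1 t, (ε ⟨((j : ℕ) + n * (N - 1)) % N, Nat.mod_lt _ j.pos⟩ : ℕ)

/-- the unitary dynamics `U_N(t,ε) = ⊗_j U^{k_j(ε,t)}`. -/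
def UN (U : Mat2) (N t : ℕ) (ε : Fin N → Fin 2) : MatN N :=
  tens (fun j => U ^ kSteps N t ε j)

/-- the set `Ω_μ^N` of scatterer configurations with `⌈μN⌉` active scatterers. -/
def OmegaSet (N : ℕ) (μ : ℝ) : Finset (Fin N → Fin 2) :=
  Finset.univ.filter (fun ε => (∑ j, (ε j : ℕ)) = Nat.ceil (μ * N))

/-- expectation `E_μ^N` with respect to the uniform probability on `Ω_μ^N`. -/
def epsAvg (N : ℕ) (μ : ℝ) (g : (Fin N → Fin 2) → ℝ) : ℝ :=
  (∑ ε ∈ OmegaSet N μ, g ε) / (OmegaSet N μ).card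

/-- the single site Hamiltonian `H = h⃗ · σ⃗`. -/
def Hmat (hv : Fin 3 → ℝ) : Mat2 := dotPauli hv

/-- `U = exp(iH)`. -/
def Umat (hv : Fin 3 → ℝ) : Mat2 := NormedSpace.exp (Complex.I • Hmat hv)

/-- `z = 1 - μ + μ e^{i(e₊ - e₋)}` with `e₊ - e₋ = 2h`. -/
def zfac (h μ : ℝ) : ℂ := 1 - μ + μ * Complex.exp (Complex.I * (2 * h))

/-- the magnetization `m⃗_t = m⃗_e + Re[(m⃗_0 - m⃗_e + i(h⃗ × m⃗_0)/h) z^t]`, with `m⃗_e = e h⃗/h²`. -/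
def mVec (hv m0 : Fin 3 → ℝ) (e μ : ℝ) (t : ℕ) (i : Fin 3) : ℝ :=
  e * hv i / (norm3 hv) ^ 2 +
    (((m0 i - e * hv i / (norm3 hv) ^ 2 : ℝ) +
        Complex.I * ((crossProduct hv m0) i / norm3 hv)) *
      (zfac (norm3 hv) μ) ^ t).re

/-- the Heisenberg-picture effective map `Γ(A) = (1-μ)A + μ U* A U`. -/
def Gam (U : Mat2) (μ : ℝ) (A : Mat2) : Mat2 := (1 - μ) • A + μ • (Uᴴ * A * U)

/-- the Schrödinger-picture effective map `Γ*(ν) = (1-μ)ν + μ U ν U*`. -/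
def GamS (U : Mat2) (μ : ℝ) (ν : Mat2) : Mat2 := (1 - μ) • ν + μ • (U * ν * Uᴴ)

/-- the density matrix with Bloch vector `m⃗`: `(𝟙 + m⃗·σ⃗)/2`. -/
def bloch (m : Fin 3 → ℝ) : Mat2 := (2 : ℂ)⁻¹ • (1 + dotPauli m)


open scoped Classical in
/-- the microcanonical projector `P_e^N`, normalized so that `Tr[P_e^N] = 1`:
`(1/Z_e^N) ∑ P_{ε₁} ⊗ ⋯ ⊗ P_{ε_N}`, the sum over `(ε_j) ∈ {e₊,e₋}^N`
with `N e ≤ ∑_j ε_j < e₊ − e₋ + N e`, where `P_{e₊} = (𝟙 + H/h)/2`, `P_{e₋} = (𝟙 − H/h)/2`. -/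
def microState (N : ℕ) (hv : Fin 3 → ℝ) (e : ℝ) : MatN N :=
  let h := norm3 hv
  let Pp : Mat2 := (2 : ℂ)⁻¹ • (1 + (h : ℂ)⁻¹ • Hmat hv)
  let Pm : Mat2 := (2 : ℂ)⁻¹ • (1 - (h : ℂ)⁻¹ • Hmat hv)
  let S : Finset (Fin N → Fin 2) := Finset.univ.filter (fun ε =>
    (N : ℝ) * e ≤ (∑ j, if ε j = 1 then h else -h) ∧
      (∑ j, if ε j = 1 then h else -h) < 2 * h + N * e)
  (Matrix.trace (∑ ε ∈ S, tens (fun j => if ε j = 1 then Pp else Pm)))⁻¹ •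
    ∑ ε ∈ S, tens (fun j => if ε j = 1 then Pp else Pm)

/-! Each product state `P_{ε₁} ⊗ ⋯ ⊗ P_{ε_N}` has trace one and, since `Tr[P_{e±} σ_α] = ±h_α/h`,
magnetization `(2k - N) h_α / h`, where `k` is the number of factors `P_{e₊}`. Its energy is
`(2k - N) h`, and the energy window has width `e₊ - e₋ = 2h`, so it admits exactly one value
`k = ⌈N (e/h + 1)/2⌉`. Thus `P_e^N` is a uniform average of states sharing that magnetization,
and `k/N → (e/h + 1)/2`. -/

lemma trace_inv_smul_sum_mul {ι n : Type*} [Fintype n] (S : Finset ι) (hS : S.Nonempty)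
    (ρ : ι → Matrix n n ℂ) (A : Matrix n n ℂ) (c : ℂ) (hρ : ∀ i ∈ S, (ρ i).trace = 1)
    (hρA : ∀ i ∈ S, (ρ i * A).trace = c) :
    (((∑ i ∈ S, ρ i).trace)⁻¹ • (∑ i ∈ S, ρ i) * A).trace = c := by
  have hcard : (S.card : ℂ) ≠ 0 := Nat.cast_ne_zero.mpr hS.card_pos.ne'
  rw [smul_mul_assoc, trace_smul, Finset.sum_mul, trace_sum, trace_sum,
    Finset.sum_congr rfl hρ, Finset.sum_congr rfl hρA]
  simp [hcard]

section TensorProduct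

variable {N : ℕ}

lemma tens_mul (B C : Fin N → Mat2) : tens B * tens C = tens fun j => B j * C j := by
  ext η η'
  simp only [tens, mul_apply, Fintype.prod_sum, Finset.prod_mul_distrib]

lemma trace_tens (B : Fin N → Mat2) : (tens B).trace = ∏ j, (B j).trace := by
  simp only [trace, diag, tens, Fintype.prod_sum]

lemma trace_tens_mul_site (P : Fin N → Mat2) (hP : ∀ k, (P k).trace = 1) (j : Fin N)
    (A : Mat2) : (tens P * site N j A).trace = (P j * A).trace := by
  rw [site, tens_mul, trace_tens, Fintype.prod_eq_single j fun k hk => by simp [hk, hP]]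
  simp

lemma trace_tens_mul_sumSite (P : Fin N → Mat2) (hP : ∀ k, (P k).trace = 1) (A : Mat2) :
    (tens P * sumSite N A).trace = ∑ j, (P j * A).trace := by
  simp only [sumSite, Finset.mul_sum, trace_sum, trace_tens_mul_site P hP]

end TensorProduct

lemma trace_pauli (i : Fin 3) : (pauli i).trace = 0 := by
  fin_cases i <;> simp [pauli, σx, σy, σz, trace_fin_two_of]

lemma trace_pauli_mul_pauli (i j : Fin 3) :
    (pauli i * pauli j).trace = if i = j then 2 else 0 := by
  fin_cases i <;> fin_cases j <;>
    simp [pauli, σx, σy, σz, trace_fin_two_of] <;> ring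

lemma trace_Hmat (hv : Fin 3 → ℝ) : (Hmat hv).trace = 0 := by
  simp [Hmat, dotPauli, trace_sum, trace_pauli]

lemma trace_Hmat_mul_pauli (hv : Fin 3 → ℝ) (α : Fin 3) :
    (Hmat hv * pauli α).trace = 2 * hv α := by
  simp [Hmat, dotPauli, Finset.sum_mul, trace_sum, trace_pauli_mul_pauli, mul_comm]

/-- `P_{e₊}` for `b = 1` and `P_{e₋}` for `b = 0`, in the form used by `microState`. -/
def specProj (hv : Fin 3 → ℝ) (b : Fin 2) : Mat2 :=
  if b = 1 then (2 : ℂ)⁻¹ • (1 + (norm3 hv : ℂ)⁻¹ • Hmat hv)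
  else (2 : ℂ)⁻¹ • (1 - (norm3 hv : ℂ)⁻¹ • Hmat hv)

lemma trace_specProj (hv : Fin 3 → ℝ) (b : Fin 2) : (specProj hv b).trace = 1 := by
  fin_cases b <;> simp [specProj, trace_Hmat]

lemma trace_specProj_mul_pauli (hv : Fin 3 → ℝ) (b : Fin 2) (α : Fin 3) :
    (specProj hv b * pauli α).trace = (((2 * (b : ℝ) - 1) * (hv α / norm3 hv) : ℝ) : ℂ) := by
  fin_cases b <;>
    simp [specProj, sub_mul, add_mul, trace_pauli, trace_Hmat_mul_pauli] <;> ring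

section SpinConfigurations

variable {N : ℕ}

def upCount (ε : Fin N → Fin 2) : ℕ := ∑ j, (ε j : ℕ)

lemma sum_two_mul_sub_one_mul (ε : Fin N → Fin 2) (a : ℝ) :
    ∑ j, (2 * ((ε j : ℕ) : ℝ) - 1) * a = (2 * upCount ε - N) * a := by
  simp [upCount, ← Finset.sum_mul, Finset.sum_sub_distrib, ← Finset.mul_sum]

lemma exists_upCount_eq {k : ℕ} (hk : k ≤ N) : ∃ ε : Fin N → Fin 2, upCount ε = k := by
  refine ⟨fun j => if (j : ℕ) < k then 1 else 0, ?_⟩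
  simp [upCount, apply_ite, Finset.sum_boole, Fin.card_filter_val_lt, hk]

lemma trace_tens_specProj_mul_sumSite (hv : Fin 3 → ℝ) (ε : Fin N → Fin 2) (α : Fin 3) :
    (tens (fun j => specProj hv (ε j)) * sumSite N (pauli α)).trace =
      (((2 * upCount ε - N) * (hv α / norm3 hv) : ℝ) : ℂ) := by
  rw [trace_tens_mul_sumSite _ (fun j => trace_specProj hv (ε j))]
  simp only [trace_specProj_mul_pauli, ← Complex.ofReal_sum, sum_two_mul_sub_one_mul]

lemma sum_ite_eq_one_neg (ε : Fin N → Fin 2) (h : ℝ) :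
    (∑ j, if ε j = 1 then h else -h) = (2 * upCount ε - N) * h := by
  rw [← sum_two_mul_sub_one_mul]
  refine Finset.sum_congr rfl fun j _ => ?_
  generalize ε j = b
  fin_cases b <;> norm_num

end SpinConfigurations

lemma energy_window_iff_natCeil {N k : ℕ} {h e : ℝ} (hh : 0 < h) (he : -h ≤ e) :
    ((N : ℝ) * e ≤ (2 * k - N) * h ∧ (2 * k - N) * h < 2 * h + N * e) ↔
      ⌈(e / h + 1) / 2 * N⌉₊ = k := by
  have hp : 0 ≤ (e / h + 1) / 2 * N := by
    have : -1 ≤ e / h := (le_div_iff₀ hh).mpr (by linarith)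
    exact mul_nonneg (by linarith) N.cast_nonneg
  rw [← Int.natCast_inj, Int.natCast_ceil_eq_ceil hp, Int.ceil_eq_iff]
  push_cast
  have key : (e / h + 1) / 2 * N * (2 * h) = N * e + N * h := by field_simp
  constructor <;> rintro ⟨h1, h2⟩ <;> constructor <;> nlinarith

open scoped Classical in
lemma microState_eq_upCount_filter (N : ℕ) {hv : Fin 3 → ℝ} (hh : 0 < norm3 hv) {e : ℝ}
    (he : -norm3 hv ≤ e) :
    microState N hv e =
      let S := Finset.univ.filter fun ε => upCount ε = ⌈(e / norm3 hv + 1) / 2 * N⌉₊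
      (∑ ε ∈ S, tens fun j => specProj hv (ε j)).trace⁻¹ •
        ∑ ε ∈ S, tens fun j => specProj hv (ε j) := by
  have hS : (Finset.univ.filter fun ε : Fin N → Fin 2 =>
      (N : ℝ) * e ≤ (∑ j, if ε j = 1 then norm3 hv else -norm3 hv) ∧
        (∑ j, if ε j = 1 then norm3 hv else -norm3 hv) < 2 * norm3 hv + N * e) =
      Finset.univ.filter fun ε => upCount ε = ⌈(e / norm3 hv + 1) / 2 * N⌉₊ := by
    ext ε
    simp only [Finset.mem_filter, Finset.mem_univ, true_and, sum_ite_eq_one_neg,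
      energy_window_iff_natCeil hh he, eq_comm]
  rw [microState, ← hS]
  rfl

lemma trace_microState_mul_sumSite (N : ℕ) {hv : Fin 3 → ℝ} (hh : 0 < norm3 hv) {e : ℝ}
    (he : e ∈ Set.Icc (-norm3 hv) (norm3 hv)) (α : Fin 3) :
    (microState N hv e * sumSite N (pauli α)).trace =
      (((2 * ⌈(e / norm3 hv + 1) / 2 * N⌉₊ - N) * (hv α / norm3 hv) : ℝ) : ℂ) := by
  rw [microState_eq_upCount_filter N hh he.1]
  refine trace_inv_smul_sum_mul _ ?_ _ _ _ (fun ε _ => ?_) fun ε hε => ?_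
  · refine (exists_upCount_eq (Nat.ceil_le.mpr ?_)).imp fun ε hε => by simpa using hε
    have : e / norm3 hv ≤ 1 := (div_le_one hh).mpr he.2
    nlinarith [N.cast_nonneg (α := ℝ)]
  · simp only [trace_tens, trace_specProj, Finset.prod_const_one]
  · rw [trace_tens_specProj_mul_sumSite, (Finset.mem_filter.mp hε).2]

lemma norm3_pos {v : Fin 3 → ℝ} (hv : v ≠ 0) : 0 < norm3 v := by
  obtain ⟨i, hi⟩ := Function.ne_iff.mp hv
  exact Real.sqrt_pos.mpr <| Finset.sum_pos' (fun i _ => sq_nonneg (v i))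
    ⟨i, Finset.mem_univ i, pow_two_pos_of_ne_zero hi⟩

/-- **equilibrium magnetization in the microcanonical ensemble.** For
`e ∈ [e₋, e₊]`, the limit `m⃗_e = lim_N (1/N) Tr[P_e^N M⃗_N]` exists and equals `e h⃗/h²`. -/
theorem kac_microcanonical_magnetization
    (hv : Fin 3 → ℝ) (hhv : hv ≠ 0) (e : ℝ)
    (he : e ∈ Set.Icc (-(norm3 hv)) (norm3 hv)) (α : Fin 3) :
    Filter.Tendsto (fun N : ℕ =>
      (N : ℝ)⁻¹ * (Matrix.trace (microState N hv e * sumSite N (pauli α))).re)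
      Filter.atTop (nhds (e * hv α / (norm3 hv) ^ 2)) := by
  have hh : 0 < norm3 hv := norm3_pos hhv
  have hp : 0 ≤ (e / norm3 hv + 1) / 2 := by
    have : -1 ≤ e / norm3 hv := (le_div_iff₀ hh).mpr (by linarith [he.1])
    linarith
  have hfrac := (tendsto_nat_ceil_mul_div_atTop hp).comp tendsto_natCast_atTop_atTop
  have hlim := ((hfrac.const_mul 2).sub_const 1).mul_const (hv α / norm3 hv)
  convert hlim.congr' ?_ using 2
  · field_simp; ring
  · filter_upwards [Filter.eventually_ne_atTop 0] with N hN
    rw [trace_microState_mul_sumSite N hh he, Complex.ofReal_re, Function.comp_apply]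
    generalize ((⌈(e / norm3 hv + 1) / 2 * N⌉₊ : ℕ) : ℝ) = K
    field_simp

end
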